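/- arXiv:1909.02348 — 3 statements merged into one kernel-verified Lean document; each statement's English description precedes it below -/
import Mathlib

section
/- Let n be a positive natural number, ε > 0, and α, β, δ > 0. Define Γ_ε(x,y) = (2πε²)^{-n/2} · exp(−‖x−y‖₂²/(2ε²)) and, for smooth compactly supported functions u, v : ℝⁿ → ℝ, define the bilinear form a(u,v) = α ∫_{ℝⁿ} ∇u(x)·∇v(x) dx + δ ∫_{ℝⁿ} u(x) v(x) dx − β ∫_{ℝⁿ} ∫_{ℝⁿ} (u(y) − u(x)) Γ_ε(x,y) dy · v(x) dx. Then with κ = ∫_{ℝⁿ} ‖z‖₂ Γ_ε(0,z) dz and c₁ = α + δ + βκ, for all smooth compactly supported u, v one has |a(u,v)| ≤ c₁ · (‖u‖²_{L²} + ‖∇u‖²_{L²})^{1/2} · (‖v‖²_{L²} + ‖∇v‖²_{L²})^{1/2}. -/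
open Real MeasureTheory
open scoped RealInnerProductSpace

/-- The Gaussian kernel `Γ_ν(x,y) = (2πν²)^{-n/2} · exp(−‖x−y‖₂²/(2ν²))` on `ℝⁿ`. -/
noncomputable def gaussK (n : ℕ) (ν : ℝ) (x y : EuclideanSpace ℝ (Fin n)) : ℝ :=
  (2 * π * ν ^ 2) ^ (-(n : ℝ) / 2) * Real.exp (-‖x - y‖ ^ 2 / (2 * ν ^ 2))

section aux

variable {X : Type*} [MeasurableSpace X] {μ : Measure X}

/-- Cauchy–Schwarz for integrals of absolute values. -/
lemma my_cs {f g : X → ℝ} (hf : MemLp f 2 μ) (hg : MemLp g 2 μ) :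
    ∫ x, |f x| * |g x| ∂μ ≤ Real.sqrt (∫ x, f x ^ 2 ∂μ) * Real.sqrt (∫ x, g x ^ 2 ∂μ) := by
  have h22 : (2:ℝ).HolderConjugate 2 := Real.HolderConjugate.two_two
  have := integral_mul_le_Lp_mul_Lq_of_nonneg (μ := μ) h22
    (Filter.Eventually.of_forall fun x => abs_nonneg (f x))
    (Filter.Eventually.of_forall fun x => abs_nonneg (g x))
    (by rw [ENNReal.ofReal_ofNat]; exact hf.abs) (by rw [ENNReal.ofReal_ofNat]; exact hg.abs)
  calc ∫ x, |f x| * |g x| ∂μ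
      ≤ (∫ x, |f x| ^ (2:ℝ) ∂μ) ^ (1/(2:ℝ)) * (∫ x, |g x| ^ (2:ℝ) ∂μ) ^ (1/(2:ℝ)) := this
    _ = Real.sqrt (∫ x, f x ^ 2 ∂μ) * Real.sqrt (∫ x, g x ^ 2 ∂μ) := by
        have habs : ∀ y : ℝ, |y| ^ (2:ℝ) = y ^ 2 := fun y => by
          rw [show (2:ℝ) = ((2:ℕ):ℝ) by push_cast; ring, Real.rpow_natCast, sq_abs]
        rw [← Real.sqrt_eq_rpow, ← Real.sqrt_eq_rpow]
        congr 2 <;> exact integral_congr_ae (Filter.Eventually.of_forall fun x => habs _)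

lemma my_cs_nonneg {f g : X → ℝ} (hf0 : ∀ x, 0 ≤ f x) (hg0 : ∀ x, 0 ≤ g x)
    (hf : MemLp f 2 μ) (hg : MemLp g 2 μ) :
    ∫ x, f x * g x ∂μ ≤ Real.sqrt (∫ x, f x ^ 2 ∂μ) * Real.sqrt (∫ x, g x ^ 2 ∂μ) := by
  have := my_cs hf hg
  refine le_trans (le_of_eq ?_) this
  exact integral_congr_ae (Filter.Eventually.of_forall fun x => by
    show f x * g x = |f x| * |g x|
    rw [abs_of_nonneg (hf0 x), abs_of_nonneg (hg0 x)])

lemma abs_integral_mul_le {f g : X → ℝ} (hf : MemLp f 2 μ) (hg : MemLp g 2 μ) :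
    |∫ x, f x * g x ∂μ| ≤ Real.sqrt (∫ x, f x ^ 2 ∂μ) * Real.sqrt (∫ x, g x ^ 2 ∂μ) := by
  rw [← Real.norm_eq_abs]
  calc ‖∫ x, f x * g x ∂μ‖ ≤ ∫ x, ‖f x * g x‖ ∂μ := norm_integral_le_integral_norm _
    _ = ∫ x, |f x| * |g x| ∂μ := by
        refine integral_congr_ae (Filter.Eventually.of_forall fun x => ?_)
        simp [abs_mul]
    _ ≤ _ := my_cs hf hg

end aux

section gauss

lemma gaussK_nonneg (n : ℕ) (ν : ℝ) (x y : EuclideanSpace ℝ (Fin n)) :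
    0 ≤ gaussK n ν x y := by
  unfold gaussK
  positivity

lemma integrable_gauss_exp {n : ℕ} {b : ℝ} (hb : 0 < b) :
    Integrable (fun z : EuclideanSpace ℝ (Fin n) => rexp (-b * ‖z‖ ^ 2)) := by
  have h := GaussianFourier.integrable_cexp_neg_mul_sq_norm_add
      (V := EuclideanSpace ℝ (Fin n)) (b := (b:ℂ)) (by simpa using hb) 0 0
  have := h.re
  refine this.congr (Filter.Eventually.of_forall fun z => ?_)
  simp [Complex.exp_ofReal_re]
  norm_cast

lemma integrable_norm_mul_gauss {n : ℕ} {b : ℝ} (hb : 0 < b) :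
    Integrable (fun z : EuclideanSpace ℝ (Fin n) => ‖z‖ * rexp (-b * ‖z‖ ^ 2)) := by
  have hint : Integrable (fun z : EuclideanSpace ℝ (Fin n) =>
      (1 + 2 / b) * rexp (-(b / 2) * ‖z‖ ^ 2)) :=
    (integrable_gauss_exp (by linarith)).const_mul _
  refine hint.mono' ?_ (Filter.Eventually.of_forall fun z => ?_)
  · exact (continuous_norm.mul ((continuous_const.mul
      (continuous_norm.pow 2)).rexp)).aestronglyMeasurable
  · have hr : (0:ℝ) ≤ ‖z‖ := norm_nonneg _
    have h1 : ‖z‖ ≤ (1 + 2 / b) * rexp (b / 2 * ‖z‖ ^ 2) := by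
      have e1 : b / 2 * ‖z‖ ^ 2 ≤ rexp (b / 2 * ‖z‖ ^ 2) :=
        (Real.add_one_le_exp _).trans' (by linarith)
      have e2 : (1:ℝ) ≤ rexp (b / 2 * ‖z‖ ^ 2) := Real.one_le_exp (by positivity)
      nlinarith [sq_nonneg (‖z‖ - 1), div_mul_cancel₀ (2:ℝ) hb.ne']
    have hkey : ‖z‖ * rexp (-b * ‖z‖ ^ 2) ≤ (1 + 2 / b) * rexp (-(b / 2) * ‖z‖ ^ 2) := by
      have := mul_le_mul_of_nonneg_right h1 (Real.exp_nonneg (-b * ‖z‖ ^ 2))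
      calc ‖z‖ * rexp (-b * ‖z‖ ^ 2)
          ≤ (1 + 2 / b) * rexp (b / 2 * ‖z‖ ^ 2) * rexp (-b * ‖z‖ ^ 2) := this
        _ = (1 + 2 / b) * rexp (-(b / 2) * ‖z‖ ^ 2) := by
            rw [mul_assoc, ← Real.exp_add]; ring_nf
    calc ‖(fun z : EuclideanSpace ℝ (Fin n) => ‖z‖ * rexp (-b * ‖z‖ ^ 2)) z‖
        = ‖z‖ * rexp (-b * ‖z‖ ^ 2) := by
          simp [abs_of_nonneg, Real.exp_nonneg, mul_nonneg hr (Real.exp_nonneg _)]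
      _ ≤ (1 + 2 / b) * rexp (-(b / 2) * ‖z‖ ^ 2) := hkey

lemma gaussK_zero_eq {n : ℕ} {ν : ℝ} (hν : 0 < ν) (z : EuclideanSpace ℝ (Fin n)) :
    gaussK n ν 0 z = (2 * π * ν ^ 2) ^ (-(n : ℝ) / 2) *
      rexp (-(1 / (2 * ν ^ 2)) * ‖z‖ ^ 2) := by
  unfold gaussK
  rw [zero_sub, norm_neg]
  congr 1
  rw [neg_div, neg_mul, one_div, inv_mul_eq_div]

lemma integrable_gaussK_zero {n : ℕ} {ν : ℝ} (hν : 0 < ν) :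
    Integrable (fun z : EuclideanSpace ℝ (Fin n) => gaussK n ν 0 z) := by
  have hb : (0:ℝ) < 1 / (2 * ν ^ 2) := by positivity
  refine ((integrable_gauss_exp hb).const_mul _).congr
    (Filter.Eventually.of_forall fun z => (gaussK_zero_eq hν z).symm)

lemma integrable_norm_gaussK_zero {n : ℕ} {ν : ℝ} (hν : 0 < ν) :
    Integrable (fun z : EuclideanSpace ℝ (Fin n) => ‖z‖ * gaussK n ν 0 z) := by
  have hb : (0:ℝ) < 1 / (2 * ν ^ 2) := by positivity
  have := ((integrable_norm_mul_gauss (n := n) hb).const_mul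
      ((2 * π * ν ^ 2) ^ (-(n : ℝ) / 2)))
  refine this.congr (Filter.Eventually.of_forall fun z => ?_)
  show _ = ‖z‖ * gaussK n ν 0 z
  rw [gaussK_zero_eq hν z]; ring

lemma continuous_gaussK_zero {n : ℕ} (ν : ℝ) :
    Continuous (fun z : EuclideanSpace ℝ (Fin n) => gaussK n ν 0 z) := by
  unfold gaussK
  fun_prop

end gauss

section grad

variable {n : ℕ}

lemma norm_grad (u : EuclideanSpace ℝ (Fin n) → ℝ) (x : EuclideanSpace ℝ (Fin n)) :
    ‖gradient u x‖ = ‖fderiv ℝ u x‖ :=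
  LinearIsometryEquiv.norm_map _ _

lemma continuous_grad {u : EuclideanSpace ℝ (Fin n) → ℝ} (hu : ContDiff ℝ (⊤ : ℕ∞) u) :
    Continuous (gradient u) :=
  (InnerProductSpace.toDual ℝ (EuclideanSpace ℝ (Fin n))).symm.continuous.comp
    (hu.continuous_fderiv (by simp))

lemma compactSupport_grad {u : EuclideanSpace ℝ (Fin n) → ℝ} (hus : HasCompactSupport u) :
    HasCompactSupport (gradient u) :=
  (hus.fderiv ℝ).comp_left (map_zero _)

lemma ftc_line {u : EuclideanSpace ℝ (Fin n) → ℝ} (hu : ContDiff ℝ (⊤ : ℕ∞) u)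
    (x z : EuclideanSpace ℝ (Fin n)) :
    u (x + z) - u x = ∫ t in (0:ℝ)..1, fderiv ℝ u (x + t • z) z := by
  have hder : ∀ t : ℝ, HasDerivAt (fun s : ℝ => u (x + s • z)) (fderiv ℝ u (x + t • z) z) t := by
    intro t
    have h1 : HasDerivAt (fun s : ℝ => x + s • z) z t := by
      simpa using ((hasDerivAt_id t).smul_const z).const_add x
    have h2 : HasFDerivAt u (fderiv ℝ u (x + t • z)) (x + t • z) :=
      (hu.differentiable (by simp) (x + t • z)).hasFDerivAt
    exact h2.comp_hasDerivAt t h1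
  have hc : Continuous fun t : ℝ => fderiv ℝ u (x + t • z) z := by
    exact ((hu.continuous_fderiv (by simp)).comp
      (continuous_const.add (continuous_id.smul continuous_const))).clm_apply continuous_const
  have := intervalIntegral.integral_eq_sub_of_hasDerivAt
    (fun t _ => hder t) (hc.intervalIntegrable 0 1)
  simpa using this.symm

end grad


section nonlocal

lemma kernel_translate {n : ℕ} (ε : ℝ) (u : EuclideanSpace ℝ (Fin n) → ℝ)
    (x : EuclideanSpace ℝ (Fin n)) :
    ∫ y, (u y - u x) * gaussK n ε x y = ∫ z, (u (x + z) - u x) * gaussK n ε 0 z := by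
  have h := MeasureTheory.integral_add_left_eq_self
    (μ := (volume : Measure (EuclideanSpace ℝ (Fin n))))
    (fun y => (u y - u x) * gaussK n ε x y) x
  rw [← h]
  refine integral_congr_ae (Filter.Eventually.of_forall fun z => ?_)
  show (u (x + z) - u x) * gaussK n ε x (x + z) = (u (x + z) - u x) * gaussK n ε 0 z
  have hg : gaussK n ε x (x + z) = gaussK n ε 0 z := by
    unfold gaussK
    rw [show x - (x + z) = 0 - z by abel]
  rw [hg]

lemma translate_pairing_bound {n : ℕ} (u v : EuclideanSpace ℝ (Fin n) → ℝ)
    (hu : ContDiff ℝ (⊤ : ℕ∞) u) (hus : HasCompactSupport u)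
    (hv : ContDiff ℝ (⊤ : ℕ∞) v) (hvs : HasCompactSupport v) (z : EuclideanSpace ℝ (Fin n)) :
    |∫ x, (u (x + z) - u x) * v x| ≤
      ‖z‖ * (Real.sqrt (∫ x, ‖gradient u x‖ ^ 2) * Real.sqrt (∫ x, v x ^ 2)) := by
  set Nu : ℝ := Real.sqrt (∫ x, ‖gradient u x‖ ^ 2) with hNu
  set Rv : ℝ := Real.sqrt (∫ x, v x ^ 2) with hRv
  obtain ⟨C, hC⟩ := (hus.fderiv ℝ).exists_bound_of_continuous (hu.continuous_fderiv (by simp))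
  set μt := (volume : Measure ℝ).restrict (Set.Ioc (0:ℝ) 1) with hμt
  haveI : IsFiniteMeasure μt := by
    constructor
    rw [hμt, Measure.restrict_apply_univ]
    exact measure_Ioc_lt_top
  have hμtuniv : (μt Set.univ).toReal = 1 := by
    rw [hμt, Measure.restrict_apply_univ, Real.volume_Ioc]
    norm_num
  -- rewrite using the fundamental theorem of calculus
  have hrw : ∀ x : EuclideanSpace ℝ (Fin n),
      (u (x + z) - u x) * v x = (∫ t, fderiv ℝ u (x + t • z) z ∂μt) * v x := by
    intro x
    rw [ftc_line hu x z, intervalIntegral.integral_of_le zero_le_one]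
  -- integrability on the product space
  have hcont : Continuous fun p : EuclideanSpace ℝ (Fin n) × ℝ =>
      fderiv ℝ u (p.1 + p.2 • z) z * v p.1 :=
    (((hu.continuous_fderiv (by simp)).comp
      (continuous_fst.add (continuous_snd.smul continuous_const))).clm_apply
        continuous_const).mul (hv.continuous.comp continuous_fst)
  have hvint : Integrable v (volume : Measure (EuclideanSpace ℝ (Fin n))) :=
    hv.continuous.integrable_of_hasCompactSupport hvs
  have hFint : Integrable (Function.uncurry fun x t => fderiv ℝ u (x + t • z) z * v x)
      ((volume : Measure (EuclideanSpace ℝ (Fin n))).prod μt) := by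
    refine Integrable.mono' (g := fun p => (C * ‖z‖ * |v p.1|) * 1) ?_
      hcont.aestronglyMeasurable (Filter.Eventually.of_forall fun p => ?_)
    · exact Integrable.mul_prod ((hvint.abs).const_mul _) (integrable_const 1)
    · have h1 : ‖fderiv ℝ u (p.1 + p.2 • z) z‖ ≤ C * ‖z‖ :=
        ((fderiv ℝ u (p.1 + p.2 • z)).le_opNorm z).trans
          (mul_le_mul_of_nonneg_right (hC _) (norm_nonneg _))
      calc ‖Function.uncurry (fun x t => fderiv ℝ u (x + t • z) z * v x) p‖
          = ‖fderiv ℝ u (p.1 + p.2 • z) z‖ * |v p.1| := by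
            simp [Function.uncurry, norm_mul, Real.norm_eq_abs]
        _ ≤ (C * ‖z‖ * |v p.1|) * 1 := by
            rw [mul_one]
            exact mul_le_mul_of_nonneg_right h1 (abs_nonneg _)
  have hswap := integral_integral_swap hFint
  -- per-t bound
  have ht : ∀ t : ℝ, |∫ x, fderiv ℝ u (x + t • z) z * v x| ≤ ‖z‖ * (Nu * Rv) := by
    intro t
    have hgrad_cont : Continuous fun x : EuclideanSpace ℝ (Fin n) =>
        gradient u (x + t • z) :=
      (continuous_grad hu).comp (continuous_id.add continuous_const)
    have hgrad_supp : HasCompactSupport fun x : EuclideanSpace ℝ (Fin n) =>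
        gradient u (x + t • z) :=
      (compactSupport_grad hus).comp_homeomorph (Homeomorph.addRight (t • z))
    have hg2 : MemLp (fun x : EuclideanSpace ℝ (Fin n) => ‖gradient u (x + t • z)‖) 2
        (volume : Measure (EuclideanSpace ℝ (Fin n))) :=
      (hgrad_cont.memLp_of_hasCompactSupport hgrad_supp).norm
    have hv2 : MemLp (fun x : EuclideanSpace ℝ (Fin n) => |v x|) 2
        (volume : Measure (EuclideanSpace ℝ (Fin n))) :=
      (hv.continuous.memLp_of_hasCompactSupport hvs).abs
    have hrhs_int : Integrable (fun x : EuclideanSpace ℝ (Fin n) =>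
        (‖z‖ * ‖gradient u (x + t • z)‖) * |v x|) := by
      refine Continuous.integrable_of_hasCompactSupport ?_ ?_
      · exact ((continuous_const.mul hgrad_cont.norm).mul hv.continuous.abs)
      · exact (hvs.abs).mul_left
    have hcs := my_cs_nonneg (μ := (volume : Measure (EuclideanSpace ℝ (Fin n))))
      (f := fun x => ‖gradient u (x + t • z)‖) (g := fun x => |v x|)
      (fun x => norm_nonneg _) (fun x => abs_nonneg _) hg2 hv2
    have htrans : ∫ x : EuclideanSpace ℝ (Fin n), ‖gradient u (x + t • z)‖ ^ 2
        = ∫ x, ‖gradient u x‖ ^ 2 :=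
      MeasureTheory.integral_add_right_eq_self (fun x => ‖gradient u x‖ ^ 2) (t • z)
    have habs2 : ∫ x : EuclideanSpace ℝ (Fin n), |v x| ^ 2 = ∫ x, v x ^ 2 := by
      refine integral_congr_ae (Filter.Eventually.of_forall fun x => ?_)
      simp [sq_abs]
    rw [← Real.norm_eq_abs]
    calc ‖∫ x, fderiv ℝ u (x + t • z) z * v x‖
        ≤ ∫ x, ‖fderiv ℝ u (x + t • z) z * v x‖ := norm_integral_le_integral_norm _
      _ ≤ ∫ x, (‖z‖ * ‖gradient u (x + t • z)‖) * |v x| := by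
          refine integral_mono_of_nonneg
            (Filter.Eventually.of_forall fun x => norm_nonneg _) hrhs_int
            (Filter.Eventually.of_forall fun x => ?_)
          have h1 : ‖fderiv ℝ u (x + t • z) z‖ ≤ ‖gradient u (x + t • z)‖ * ‖z‖ := by
            rw [norm_grad]
            exact (fderiv ℝ u (x + t • z)).le_opNorm z
          calc ‖fderiv ℝ u (x + t • z) z * v x‖
              = ‖fderiv ℝ u (x + t • z) z‖ * |v x| := by
                simp [Real.norm_eq_abs, abs_mul]
            _ ≤ (‖z‖ * ‖gradient u (x + t • z)‖) * |v x| := by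
                refine mul_le_mul_of_nonneg_right ?_ (abs_nonneg _)
                rw [mul_comm]; exact h1
      _ = ‖z‖ * ∫ x, ‖gradient u (x + t • z)‖ * |v x| := by
          rw [← integral_const_mul]
          refine integral_congr_ae (Filter.Eventually.of_forall fun x => ?_)
          ring
      _ ≤ ‖z‖ * (Real.sqrt (∫ x, ‖gradient u (x + t • z)‖ ^ 2) *
            Real.sqrt (∫ x, |v x| ^ 2)) :=
          mul_le_mul_of_nonneg_left hcs (norm_nonneg _)
      _ = ‖z‖ * (Nu * Rv) := by rw [htrans, habs2]
  -- assemble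
  calc |∫ x, (u (x + z) - u x) * v x|
      = |∫ x, ∫ t, fderiv ℝ u (x + t • z) z * v x ∂μt| := by
        congr 1
        refine integral_congr_ae (Filter.Eventually.of_forall fun x => ?_)
        show (u (x + z) - u x) * v x = ∫ t, fderiv ℝ u (x + t • z) z * v x ∂μt
        rw [hrw x, ← integral_mul_const]
    _ = |∫ t, ∫ x, fderiv ℝ u (x + t • z) z * v x ∂(volume) ∂μt| := by rw [hswap]
    _ ≤ ‖z‖ * (Nu * Rv) * (μt Set.univ).toReal := by
        rw [← Real.norm_eq_abs]
        exact norm_integral_le_of_norm_le_const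
          (Filter.Eventually.of_forall fun t => by
            rw [Real.norm_eq_abs]; exact ht t)
    _ = ‖z‖ * (Nu * Rv) := by rw [hμtuniv, mul_one]

lemma nonlocal_bound {n : ℕ} {ε : ℝ} (hε : 0 < ε) (u v : EuclideanSpace ℝ (Fin n) → ℝ)
    (hu : ContDiff ℝ (⊤ : ℕ∞) u) (hus : HasCompactSupport u)
    (hv : ContDiff ℝ (⊤ : ℕ∞) v) (hvs : HasCompactSupport v) :
    |∫ x, (∫ y, (u y - u x) * gaussK n ε x y) * v x| ≤
      (∫ z, ‖z‖ * gaussK n ε 0 z) *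
        (Real.sqrt (∫ x, ‖gradient u x‖ ^ 2) * Real.sqrt (∫ x, v x ^ 2)) := by
  set Nu : ℝ := Real.sqrt (∫ x, ‖gradient u x‖ ^ 2) with hNu
  set Rv : ℝ := Real.sqrt (∫ x, v x ^ 2) with hRv
  obtain ⟨M, hM⟩ := hus.exists_bound_of_continuous hu.continuous
  have hvint : Integrable v (volume : Measure (EuclideanSpace ℝ (Fin n))) :=
    hv.continuous.integrable_of_hasCompactSupport hvs
  -- product integrability
  have hcont : Continuous fun p : EuclideanSpace ℝ (Fin n) × EuclideanSpace ℝ (Fin n) =>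
      (u (p.1 + p.2) - u p.1) * gaussK n ε 0 p.2 * v p.1 :=
    (((hu.continuous.comp (continuous_fst.add continuous_snd)).sub
      (hu.continuous.comp continuous_fst)).mul
        ((continuous_gaussK_zero ε).comp continuous_snd)).mul
          (hv.continuous.comp continuous_fst)
  have hFint : Integrable
      (Function.uncurry fun x zz => (u (x + zz) - u x) * gaussK n ε 0 zz * v x)
      ((volume : Measure (EuclideanSpace ℝ (Fin n))).prod volume) := by
    refine Integrable.mono' (g := fun p => (2 * M * |v p.1|) * gaussK n ε 0 p.2) ?_
      hcont.aestronglyMeasurable (Filter.Eventually.of_forall fun p => ?_)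
    · exact Integrable.mul_prod ((hvint.abs).const_mul _) (integrable_gaussK_zero hε)
    · have hg0 := gaussK_nonneg n ε 0 p.2
      have h1 : |u (p.1 + p.2) - u p.1| ≤ 2 * M := by
        have := hM (p.1 + p.2); have := hM p.1
        calc |u (p.1 + p.2) - u p.1| ≤ |u (p.1 + p.2)| + |u p.1| := abs_sub _ _
          _ ≤ 2 * M := by
              rw [two_mul]
              gcongr <;> simpa [Real.norm_eq_abs] using ‹_›
      calc ‖Function.uncurry (fun x zz => (u (x + zz) - u x) * gaussK n ε 0 zz * v x) p‖
          = |u (p.1 + p.2) - u p.1| * gaussK n ε 0 p.2 * |v p.1| := by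
            simp [Function.uncurry, abs_mul, abs_of_nonneg hg0, Real.norm_eq_abs]
        _ ≤ (2 * M) * gaussK n ε 0 p.2 * |v p.1| := by
            gcongr
        _ = (2 * M * |v p.1|) * gaussK n ε 0 p.2 := by ring
  have hswap := integral_integral_swap hFint
  have hIb : ∀ z : EuclideanSpace ℝ (Fin n), |∫ x, (u (x + z) - u x) * v x| ≤
      ‖z‖ * (Nu * Rv) := fun z => translate_pairing_bound u v hu hus hv hvs z
  have hbound_int : Integrable (fun z : EuclideanSpace ℝ (Fin n) =>
      (Nu * Rv) * (‖z‖ * gaussK n ε 0 z)) :=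
    (integrable_norm_gaussK_zero hε).const_mul _
  calc |∫ x, (∫ y, (u y - u x) * gaussK n ε x y) * v x|
      = |∫ x, ∫ zz, (u (x + zz) - u x) * gaussK n ε 0 zz * v x| := by
        congr 1
        refine integral_congr_ae (Filter.Eventually.of_forall fun x => ?_)
        show (∫ y, (u y - u x) * gaussK n ε x y) * v x
          = ∫ zz, (u (x + zz) - u x) * gaussK n ε 0 zz * v x
        rw [kernel_translate ε u x, ← integral_mul_const]
    _ = |∫ zz, ∫ x, (u (x + zz) - u x) * gaussK n ε 0 zz * v x| := by rw [hswap]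
    _ = |∫ zz, (∫ x, (u (x + zz) - u x) * v x) * gaussK n ε 0 zz| := by
        congr 1
        refine integral_congr_ae (Filter.Eventually.of_forall fun zz => ?_)
        show ∫ x, (u (x + zz) - u x) * gaussK n ε 0 zz * v x
          = (∫ x, (u (x + zz) - u x) * v x) * gaussK n ε 0 zz
        rw [← integral_mul_const]
        refine integral_congr_ae (Filter.Eventually.of_forall fun x => ?_)
        show (u (x + zz) - u x) * gaussK n ε 0 zz * v x
          = (u (x + zz) - u x) * v x * gaussK n ε 0 zz
        ring
    _ ≤ ∫ zz, |(∫ x, (u (x + zz) - u x) * v x) * gaussK n ε 0 zz| := by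
        rw [← Real.norm_eq_abs]
        refine (norm_integral_le_integral_norm _).trans (le_of_eq ?_)
        refine integral_congr_ae (Filter.Eventually.of_forall fun zz => ?_)
        show ‖(∫ x, (u (x + zz) - u x) * v x) * gaussK n ε 0 zz‖
          = |(∫ x, (u (x + zz) - u x) * v x) * gaussK n ε 0 zz|
        rw [Real.norm_eq_abs]
    _ ≤ ∫ zz, (Nu * Rv) * (‖zz‖ * gaussK n ε 0 zz) := by
        refine integral_mono_of_nonneg
          (Filter.Eventually.of_forall fun zz => abs_nonneg _) hbound_int
          (Filter.Eventually.of_forall fun zz => ?_)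
        have hg0 := gaussK_nonneg n ε 0 zz
        calc |(∫ x, (u (x + zz) - u x) * v x) * gaussK n ε 0 zz|
            = |∫ x, (u (x + zz) - u x) * v x| * gaussK n ε 0 zz := by
              rw [abs_mul, abs_of_nonneg hg0]
          _ ≤ (‖zz‖ * (Nu * Rv)) * gaussK n ε 0 zz :=
              mul_le_mul_of_nonneg_right (hIb zz) hg0
          _ = (Nu * Rv) * (‖zz‖ * gaussK n ε 0 zz) := by ring
    _ = (∫ zz, ‖zz‖ * gaussK n ε 0 zz) * (Nu * Rv) := by
        rw [integral_const_mul]; ring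

end nonlocal

/-- Continuity of the mixed local-nonlocal bilinear form: with
`κ = ∫ ‖z‖ Γ_ε(0,z) dz` and `c₁ = α + δ + βκ`, `|a(u,v)| ≤ c₁ ‖u‖_{H¹} ‖v‖_{H¹}`
for all smooth compactly supported `u, v`. -/
theorem bilinear_form_continuity (n : ℕ) (hn : 0 < n) (ε α β δ : ℝ)
    (hε : 0 < ε) (hα : 0 < α) (hβ : 0 < β) (hδ : 0 < δ)
    (u v : EuclideanSpace ℝ (Fin n) → ℝ)
    (hu : ContDiff ℝ (⊤ : ℕ∞) u) (hus : HasCompactSupport u)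
    (hv : ContDiff ℝ (⊤ : ℕ∞) v) (hvs : HasCompactSupport v) :
    |α * (∫ x, ⟪gradient u x, gradient v x⟫) + δ * (∫ x, u x * v x)
        - β * ∫ x, (∫ y, (u y - u x) * gaussK n ε x y) * v x|
      ≤ (α + δ + β * ∫ z, ‖z‖ * gaussK n ε 0 z) *
          Real.sqrt ((∫ x, u x ^ 2) + ∫ x, ‖gradient u x‖ ^ 2) *
          Real.sqrt ((∫ x, v x ^ 2) + ∫ x, ‖gradient v x‖ ^ 2) := by
  classical
  set G : EuclideanSpace ℝ (Fin n) → ℝ := fun z => gaussK n ε 0 z with hGdef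
  set κ : ℝ := ∫ z, ‖z‖ * G z with hκdef
  -- L² membership
  have hu2 : MemLp u 2 (volume : Measure (EuclideanSpace ℝ (Fin n))) := hu.continuous.memLp_of_hasCompactSupport hus
  have hv2 : MemLp v 2 (volume : Measure (EuclideanSpace ℝ (Fin n))) := hv.continuous.memLp_of_hasCompactSupport hvs
  have hgu2 : MemLp (fun x : EuclideanSpace ℝ (Fin n) => ‖gradient u x‖) 2 (volume : Measure (EuclideanSpace ℝ (Fin n))) :=
    (((continuous_grad hu).memLp_of_hasCompactSupport (compactSupport_grad hus))).norm
  have hgv2 : MemLp (fun x : EuclideanSpace ℝ (Fin n) => ‖gradient v x‖) 2 (volume : Measure (EuclideanSpace ℝ (Fin n))) :=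
    (((continuous_grad hv).memLp_of_hasCompactSupport (compactSupport_grad hvs))).norm
  set Pu : ℝ := Real.sqrt (∫ x, u x ^ 2) with hPu
  set Nu : ℝ := Real.sqrt (∫ x, ‖gradient u x‖ ^ 2) with hNu
  set Rv : ℝ := Real.sqrt (∫ x, v x ^ 2) with hRv
  set Nv : ℝ := Real.sqrt (∫ x, ‖gradient v x‖ ^ 2) with hNv
  set Su : ℝ := Real.sqrt ((∫ x, u x ^ 2) + ∫ x, ‖gradient u x‖ ^ 2) with hSu
  set Sv : ℝ := Real.sqrt ((∫ x, v x ^ 2) + ∫ x, ‖gradient v x‖ ^ 2) with hSv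
  -- nonnegativity of integrals of squares
  have int_sq_nonneg : ∀ f : EuclideanSpace ℝ (Fin n) → ℝ, 0 ≤ ∫ x, f x ^ 2 :=
    fun f => integral_nonneg fun x => sq_nonneg _
  have hPuSu : Pu ≤ Su :=
    Real.sqrt_le_sqrt (le_add_of_nonneg_right (int_sq_nonneg (fun x => ‖gradient u x‖)))
  have hNuSu : Nu ≤ Su := Real.sqrt_le_sqrt (le_add_of_nonneg_left (int_sq_nonneg u))
  have hRvSv : Rv ≤ Sv :=
    Real.sqrt_le_sqrt (le_add_of_nonneg_right (int_sq_nonneg (fun x => ‖gradient v x‖)))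
  have hNvSv : Nv ≤ Sv := Real.sqrt_le_sqrt (le_add_of_nonneg_left (int_sq_nonneg v))
  have hSu0 : 0 ≤ Su := Real.sqrt_nonneg _
  have hSv0 : 0 ≤ Sv := Real.sqrt_nonneg _
  have hNu0 : 0 ≤ Nu := Real.sqrt_nonneg _
  have hRv0 : 0 ≤ Rv := Real.sqrt_nonneg _
  have hκ0 : 0 ≤ κ := integral_nonneg fun z =>
    mul_nonneg (norm_nonneg _) (gaussK_nonneg n ε 0 z)
  -- bound the local terms
  have hA : |∫ x, ⟪gradient u x, gradient v x⟫| ≤ Nu * Nv := by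
    have hmono : ∫ x, ‖⟪gradient u x, gradient v x⟫‖ ≤
        ∫ x, ‖gradient u x‖ * ‖gradient v x‖ := by
      refine integral_mono_of_nonneg (Filter.Eventually.of_forall fun x => norm_nonneg _)
        ?_ (Filter.Eventually.of_forall fun x => ?_)
      · exact (((continuous_grad hu).norm.mul (continuous_grad hv).norm)).integrable_of_hasCompactSupport
          (((compactSupport_grad hus).norm.mul_right))
      · exact norm_inner_le_norm _ _
    rw [← Real.norm_eq_abs]
    calc ‖∫ x, ⟪gradient u x, gradient v x⟫‖
        ≤ ∫ x, ‖⟪gradient u x, gradient v x⟫‖ := norm_integral_le_integral_norm _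
      _ ≤ ∫ x, ‖gradient u x‖ * ‖gradient v x‖ := hmono
      _ ≤ Nu * Nv := my_cs_nonneg (fun x => norm_nonneg _) (fun x => norm_nonneg _) hgu2 hgv2
  have hB : |∫ x, u x * v x| ≤ Pu * Rv := abs_integral_mul_le hu2 hv2
  -- the nonlocal term
  have hC : |∫ x, (∫ y, (u y - u x) * gaussK n ε x y) * v x| ≤ κ * (Nu * Rv) :=
    nonlocal_bound hε u v hu hus hv hvs
  -- assembly
  have habs : |α * (∫ x, ⟪gradient u x, gradient v x⟫) + δ * (∫ x, u x * v x)
      - β * ∫ x, (∫ y, (u y - u x) * gaussK n ε x y) * v x|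
      ≤ α * (Nu * Nv) + δ * (Pu * Rv) + β * (κ * (Nu * Rv)) := by
    have h1 := abs_add_le (α * (∫ x, ⟪gradient u x, gradient v x⟫)) (δ * (∫ x, u x * v x))
    calc |α * (∫ x, ⟪gradient u x, gradient v x⟫) + δ * (∫ x, u x * v x)
        - β * ∫ x, (∫ y, (u y - u x) * gaussK n ε x y) * v x|
        ≤ |α * (∫ x, ⟪gradient u x, gradient v x⟫) + δ * (∫ x, u x * v x)|
          + |β * ∫ x, (∫ y, (u y - u x) * gaussK n ε x y) * v x| := abs_sub _ _
      _ ≤ |α * (∫ x, ⟪gradient u x, gradient v x⟫)| + |δ * (∫ x, u x * v x)|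
          + |β * ∫ x, (∫ y, (u y - u x) * gaussK n ε x y) * v x| := by gcongr
      _ ≤ α * (Nu * Nv) + δ * (Pu * Rv) + β * (κ * (Nu * Rv)) := by
          rw [abs_mul, abs_mul, abs_mul, abs_of_pos hα, abs_of_pos hδ, abs_of_pos hβ]
          gcongr
  refine habs.trans ?_
  have e1 : α * (Nu * Nv) ≤ α * (Su * Sv) := by
    have : Nu * Nv ≤ Su * Sv := mul_le_mul hNuSu hNvSv (Real.sqrt_nonneg _) hSu0
    nlinarith
  have e2 : δ * (Pu * Rv) ≤ δ * (Su * Sv) := by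
    have : Pu * Rv ≤ Su * Sv := mul_le_mul hPuSu hRvSv hRv0 hSu0
    nlinarith
  have e3 : β * (κ * (Nu * Rv)) ≤ β * (κ * (Su * Sv)) := by
    have h : Nu * Rv ≤ Su * Sv := mul_le_mul hNuSu hRvSv hRv0 hSu0
    exact mul_le_mul_of_nonneg_left (mul_le_mul_of_nonneg_left h hκ0) hβ.le
  calc α * (Nu * Nv) + δ * (Pu * Rv) + β * (κ * (Nu * Rv))
      ≤ α * (Su * Sv) + δ * (Su * Sv) + β * (κ * (Su * Sv)) := by linarith
    _ = (α + δ + β * κ) * Su * Sv := by ring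
end

section
/- Let n be a positive natural number, ε > 0, and α, β, δ > 0. Define Γ_ε(x,y) = (2πε²)^{-n/2} · exp(−‖x−y‖₂²/(2ε²)) and, for smooth compactly supported functions u, v : ℝⁿ → ℝ, define the bilinear form a(u,v) = α ∫_{ℝⁿ} ∇u(x)·∇v(x) dx + δ ∫_{ℝⁿ} u(x) v(x) dx − β ∫_{ℝⁿ} ∫_{ℝⁿ} (u(y) − u(x)) Γ_ε(x,y) dy · v(x) dx. Then there exist constants c₂ ≥ 0 and c₃ > 0 such that the Gårding inequality a(u,u) + c₂ ‖u‖²_{L²(ℝⁿ)} ≥ c₃ (‖u‖²_{L²} + ‖∇u‖²_{L²}) holds for all smooth compactly supported u : ℝⁿ → ℝ. -/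
open Real MeasureTheory
open scoped RealInnerProductSpace

/-- The real Gaussian `exp (-b‖v‖²)` is integrable on a finite dimensional
real inner product space. -/
lemma integrable_exp_gauss {V : Type*} [NormedAddCommGroup V] [InnerProductSpace ℝ V]
    [FiniteDimensional ℝ V] [MeasurableSpace V] [BorelSpace V] {b : ℝ} (hb : 0 < b) :
    Integrable (fun v : V => Real.exp (-b * ‖v‖ ^ 2)) := by
  have h := (GaussianFourier.integrable_cexp_neg_mul_sq_norm_add (V := V) (b := (b : ℂ))
    (by simpa using hb) 0 (0 : V)).norm
  refine h.congr (Filter.Eventually.of_forall fun v => ?_)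
  simp [Complex.norm_exp, ← Complex.ofReal_pow]

set_option maxHeartbeats 1000000 in
/-- Gårding inequality for the mixed local-nonlocal bilinear form: there exist
`c₂ ≥ 0` and `c₃ > 0` with `a(u,u) + c₂‖u‖²_{L²} ≥ c₃‖u‖²_{H¹}` for all smooth
compactly supported `u`. -/
theorem bilinear_form_garding (n : ℕ) (hn : 0 < n) (ε α β δ : ℝ)
    (hε : 0 < ε) (hα : 0 < α) (hβ : 0 < β) (hδ : 0 < δ) :
    ∃ c₂ c₃ : ℝ, 0 ≤ c₂ ∧ 0 < c₃ ∧
      ∀ u : EuclideanSpace ℝ (Fin n) → ℝ, ContDiff ℝ (⊤ : ℕ∞) u → HasCompactSupport u →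
        α * (∫ x, ⟪gradient u x, gradient u x⟫) + δ * (∫ x, u x * u x)
            - β * (∫ x, (∫ y, (u y - u x) * gaussK n ε x y) * u x)
            + c₂ * ∫ x, u x ^ 2
          ≥ c₃ * ((∫ x, u x ^ 2) + ∫ x, ‖gradient u x‖ ^ 2) := by
  classical
  refine ⟨0, min α δ, le_rfl, lt_min hα hδ, ?_⟩
  intro u hu hsupp
  set b : ℝ := 1 / (2 * ε ^ 2) with hb_def
  have hb : 0 < b := by positivity
  set c : ℝ := (2 * π * ε ^ 2) ^ (-(n : ℝ) / 2) with hc_def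
  have hc : 0 < c := Real.rpow_pos_of_pos (by positivity) _
  set g : EuclideanSpace ℝ (Fin n) → ℝ := fun z => c * Real.exp (-b * ‖z‖ ^ 2) with hg_def
  have hgK : ∀ x y, gaussK n ε x y = g (x - y) := by
    intro x y
    simp only [gaussK, hg_def, hc_def, hb_def]
    congr 2
    field_simp
  have hg_nonneg : ∀ z, 0 ≤ g z := fun z => by positivity
  have hg_cont : Continuous g :=
    continuous_const.mul (Real.continuous_exp.comp ((continuous_const.mul (continuous_norm.pow 2)))) 
  have hg_int : Integrable g := (integrable_exp_gauss hb).const_mul c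
  have hg_total : ∫ z, g z = 1 := by
    have h1 : ∫ z : EuclideanSpace ℝ (Fin n), Real.exp (-b * ‖z‖ ^ 2)
        = (π / b) ^ ((n : ℝ) / 2) := by
      rw [GaussianFourier.integral_rexp_neg_mul_sq_norm hb, finrank_euclideanSpace_fin]
    have h2 : π / b = 2 * π * ε ^ 2 := by rw [hb_def]; field_simp
    rw [hg_def]
    simp only
    rw [integral_const_mul, h1, h2, hc_def, ← Real.rpow_add (by positivity)]
    have h3 : (-(n:ℝ)/2 + (n:ℝ)/2) = 0 := by ring
    rw [h3, Real.rpow_zero]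
  -- basic integrability of u
  have hu_cont : Continuous u := hu.continuous
  have hu_int : Integrable u := hu_cont.integrable_of_hasCompactSupport hsupp
  have hu2_supp : HasCompactSupport (fun x => u x ^ 2) := by
    exact hsupp.comp_left (g := fun t : ℝ => t ^ 2) (by simp)
  have hu2_int : Integrable (fun x => u x ^ 2) :=
    (hu_cont.pow 2).integrable_of_hasCompactSupport hu2_supp
  obtain ⟨M, hM⟩ := hsupp.exists_bound_of_continuous hu_cont
  -- product integrability
  have hF2 : Integrable (fun p : EuclideanSpace ℝ (Fin n) × EuclideanSpace ℝ (Fin n) =>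
      u p.2 ^ 2 * g (p.1 - p.2)) (volume.prod volume) := by
    simpa using hu2_int.convolution_integrand (ContinuousLinearMap.mul ℝ ℝ) hg_int
  have hF1 : Integrable (fun p : EuclideanSpace ℝ (Fin n) × EuclideanSpace ℝ (Fin n) =>
      u p.1 ^ 2 * g (p.1 - p.2)) (volume.prod volume) := by
    refine hF2.swap.congr (Filter.Eventually.of_forall fun p => ?_)
    simp [Function.comp, hg_def, norm_sub_rev]
  have hFc : Integrable (fun p : EuclideanSpace ℝ (Fin n) × EuclideanSpace ℝ (Fin n) =>
      u p.1 * (u p.2 * g (p.1 - p.2))) (volume.prod volume) := by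
    have h0 : Integrable (fun p : EuclideanSpace ℝ (Fin n) × EuclideanSpace ℝ (Fin n) =>
        u p.2 * g (p.1 - p.2)) (volume.prod volume) := by
      simpa using hu_int.convolution_integrand (ContinuousLinearMap.mul ℝ ℝ) hg_int
    exact h0.bdd_mul ((hu_cont.comp continuous_fst).aestronglyMeasurable)
      (Filter.Eventually.of_forall fun p => hM p.1)
  -- the cross integral is at most ‖u‖²
  have hprod_le : (∫ p : EuclideanSpace ℝ (Fin n) × EuclideanSpace ℝ (Fin n),
        u p.1 * (u p.2 * g (p.1 - p.2)) ∂(volume.prod volume))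
      ≤ ∫ p : EuclideanSpace ℝ (Fin n) × EuclideanSpace ℝ (Fin n),
        (u p.1 ^ 2 * g (p.1 - p.2) + u p.2 ^ 2 * g (p.1 - p.2)) / 2 ∂(volume.prod volume) := by
    refine integral_mono hFc ((hF1.add hF2).div_const 2) fun p => ?_
    have h := mul_nonneg (sq_nonneg (u p.1 - u p.2)) (hg_nonneg (p.1 - p.2))
    nlinarith [h]
  have hI1 : (∫ p : EuclideanSpace ℝ (Fin n) × EuclideanSpace ℝ (Fin n),
      u p.1 ^ 2 * g (p.1 - p.2) ∂(volume.prod volume)) = ∫ x, u x ^ 2 := by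
    rw [integral_prod _ hF1]
    have h : ∀ x : EuclideanSpace ℝ (Fin n), (∫ y, u x ^ 2 * g (x - y)) = u x ^ 2 := by
      intro x
      rw [integral_const_mul, integral_sub_left_eq_self g volume x, hg_total, mul_one]
    simp_rw [h]
  have hI2 : (∫ p : EuclideanSpace ℝ (Fin n) × EuclideanSpace ℝ (Fin n),
      u p.2 ^ 2 * g (p.1 - p.2) ∂(volume.prod volume)) = ∫ x, u x ^ 2 := by
    rw [integral_prod _ hF2,
      integral_integral_swap (f := fun x y : EuclideanSpace ℝ (Fin n) => u y ^ 2 * g (x - y))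
        (by exact hF2)]
    have h : ∀ y : EuclideanSpace ℝ (Fin n), (∫ x, u y ^ 2 * g (x - y)) = u y ^ 2 := by
      intro y
      rw [integral_const_mul, integral_sub_right_eq_self g y, hg_total, mul_one]
    simp_rw [h]
  -- the inner integral
  have hxint : ∀ x : EuclideanSpace ℝ (Fin n), Integrable (fun y => u y * g (x - y)) := by
    intro x
    refine Continuous.integrable_of_hasCompactSupport
      (hu_cont.mul (hg_cont.comp (continuous_const.sub continuous_id))) ?_
    exact hsupp.mul_right
  have hinner : ∀ x : EuclideanSpace ℝ (Fin n),
      (∫ y, (u y - u x) * gaussK n ε x y) = (∫ y, u y * g (x - y)) - u x := by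
    intro x
    have h1 : Integrable (fun y => u x * g (x - y)) := (hg_int.comp_sub_left x).const_mul (u x)
    have h2 : (fun y => (u y - u x) * gaussK n ε x y)
        = fun y => u y * g (x - y) - u x * g (x - y) := by
      funext y; rw [hgK]; ring
    rw [h2, integral_sub (hxint x) h1, integral_const_mul,
      integral_sub_left_eq_self g volume x, hg_total, mul_one]
  have hNrepr : (∫ x, (∫ y, (u y - u x) * gaussK n ε x y) * u x)
      = (∫ p : EuclideanSpace ℝ (Fin n) × EuclideanSpace ℝ (Fin n),
          u p.1 * (u p.2 * g (p.1 - p.2)) ∂(volume.prod volume)) - ∫ x, u x ^ 2 := by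
    have e1 : ∀ x : EuclideanSpace ℝ (Fin n), (∫ y, (u y - u x) * gaussK n ε x y) * u x
        = (∫ y, u x * (u y * g (x - y))) - u x ^ 2 := by
      intro x
      rw [hinner x, integral_const_mul]
      ring
    simp_rw [e1]
    rw [integral_sub hFc.integral_prod_left hu2_int, integral_prod _ hFc]
  have hN : (∫ x, (∫ y, (u y - u x) * gaussK n ε x y) * u x) ≤ 0 := by
    have hsum : (∫ p : EuclideanSpace ℝ (Fin n) × EuclideanSpace ℝ (Fin n),
        (u p.1 ^ 2 * g (p.1 - p.2) + u p.2 ^ 2 * g (p.1 - p.2)) / 2 ∂(volume.prod volume))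
        = ∫ x, u x ^ 2 := by
      rw [integral_div, integral_add hF1 hF2, hI1, hI2]
      ring
    rw [hNrepr]
    linarith [hprod_le, hsum.le, hsum.ge]
  -- final assembly
  have hGnn : 0 ≤ ∫ x, ‖gradient u x‖ ^ 2 := integral_nonneg fun x => sq_nonneg _
  have hUnn : 0 ≤ ∫ x, u x ^ 2 := integral_nonneg fun x => sq_nonneg _
  have hGeq : (∫ x, ⟪gradient u x, gradient u x⟫) = ∫ x, ‖gradient u x‖ ^ 2 := by
    congr 1
    funext x
    exact real_inner_self_eq_norm_sq _
  have hUeq : (∫ x, u x * u x) = ∫ x, u x ^ 2 := by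
    congr 1
    funext x
    ring
  rw [hGeq, hUeq]
  have h1 : (min α δ) ≤ α := min_le_left _ _
  have h2 : (min α δ) ≤ δ := min_le_right _ _
  nlinarith [mul_nonneg (sub_nonneg.2 h1) hGnn, mul_nonneg (sub_nonneg.2 h2) hUnn,
    mul_nonneg hβ.le (neg_nonneg.2 hN)]
end

section
/- Let n be a positive natural number and ν > 0. Let φ : ℝ → ℝ be Lipschitz continuous with constant L_φ and let A₀ ∈ L²(ℝⁿ). For a measurable v : ℝⁿ → ℝ define Φ_ν(v)(x) = ∫_{ℝⁿ} φ(v(y)) Γ_ν(x,y) dy. Then for all v₁, v₂ ∈ L²(ℝⁿ) one has ‖A₀ · (Φ_ν(v₁) − Φ_ν(v₂))‖_{L²(ℝⁿ)} ≤ L_φ · ‖v₁ − v₂‖_{L²(ℝⁿ)} · ‖A₀‖_{L²(ℝⁿ)} · (2ν√π)^{-n/2}. -/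
/-!
For fixed `x`, the Lipschitz bound on `φ` and Cauchy–Schwarz in `y` give
`|Φ_ν(v₁)(x) - Φ_ν(v₂)(x)| ≤ L_φ ‖v₁ - v₂‖₂ ‖Γ_ν(x, ·)‖₂`, and the Gaussian integral shows
`‖Γ_ν(x, ·)‖₂² = (2ν√π)^{-n}` for every `x`. Multiplying this uniform bound by `|A₀ x|` and
taking `L²` norms in `x` gives the estimate.
-/

open Real MeasureTheory

open scoped ENNReal NNReal

section LipschitzKernel

variable {α : Type*} [MeasurableSpace α] {μ : Measure α} {φ : ℝ → ℝ} {K : ℝ≥0}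
  {k v v₁ v₂ : α → ℝ}

lemma integrable_comp_mul_of_memLp_two (hφ : LipschitzWith K φ) (hv : MemLp v 2 μ)
    (hk : Integrable k μ) (hk₂ : MemLp k 2 μ) : Integrable (fun y => φ (v y) * k y) μ := by
  have hφv : MemLp (fun y => φ (v y) - φ 0) 2 μ :=
    (hφ.sub (LipschitzWith.const (φ 0))).comp_memLp (sub_self _) hv
  have hprod : Integrable (fun y => (φ (v y) - φ 0) * k y) μ :=
    memLp_one_iff_integrable.mp (hk₂.mul' hφv)
  refine (hprod.add (hk.const_mul (φ 0))).congr (ae_of_all _ fun y => ?_)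
  simp only [Pi.add_apply]
  ring

lemma enorm_integral_comp_mul_sub_le (hφ : LipschitzWith K φ) (hk : Integrable k μ)
    (hk₂ : MemLp k 2 μ) (hv₁ : MemLp v₁ 2 μ) (hv₂ : MemLp v₂ 2 μ) :
    ‖(∫ y, φ (v₁ y) * k y ∂μ) - ∫ y, φ (v₂ y) * k y ∂μ‖ₑ
      ≤ K * eLpNorm (fun y => v₁ y - v₂ y) 2 μ * eLpNorm k 2 μ := by
  have hmeas : AEStronglyMeasurable (fun y => φ (v₁ y) - φ (v₂ y)) μ :=
    (hφ.continuous.comp_aestronglyMeasurable hv₁.1).sub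
      (hφ.continuous.comp_aestronglyMeasurable hv₂.1)
  calc ‖(∫ y, φ (v₁ y) * k y ∂μ) - ∫ y, φ (v₂ y) * k y ∂μ‖ₑ
      = ‖∫ y, (φ (v₁ y) - φ (v₂ y)) * k y ∂μ‖ₑ := by
        rw [← integral_sub (integrable_comp_mul_of_memLp_two hφ hv₁ hk hk₂)
          (integrable_comp_mul_of_memLp_two hφ hv₂ hk hk₂)]
        simp only [sub_mul]
    _ ≤ eLpNorm (fun y => (φ (v₁ y) - φ (v₂ y)) * k y) 1 μ := by
        rw [eLpNorm_one_eq_lintegral_enorm]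
        exact enorm_integral_le_lintegral_enorm _
    _ ≤ eLpNorm (fun y => φ (v₁ y) - φ (v₂ y)) 2 μ * eLpNorm k 2 μ := by
        simpa only [ENNReal.coe_one, one_mul] using
          eLpNorm_le_eLpNorm_mul_eLpNorm'_of_norm (r := 1) hmeas hk₂.1 (· * ·) 1
            (ae_of_all _ fun y => by simp [norm_mul])
    _ ≤ K * eLpNorm (fun y => v₁ y - v₂ y) 2 μ * eLpNorm k 2 μ := by
        gcongr
        refine eLpNorm_le_mul_eLpNorm_of_ae_le_mul' (ae_of_all _ fun y => ?_) 2
        rw [← edist_eq_enorm_sub, ← edist_eq_enorm_sub]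
        exact hφ.edist_le_mul (v₁ y) (v₂ y)

end LipschitzKernel

lemma integral_exp_neg_mul_norm_sub_sq {V : Type*} [NormedAddCommGroup V]
    [InnerProductSpace ℝ V] [FiniteDimensional ℝ V] [MeasurableSpace V] [BorelSpace V]
    {b : ℝ} (hb : 0 < b) (x : V) :
    ∫ y, rexp (-b * ‖x - y‖ ^ 2) = (π / b) ^ (Module.finrank ℝ V / 2 : ℝ) := by
  rw [integral_sub_left_eq_self (fun y => rexp (-b * ‖y‖ ^ 2)),
    GaussianFourier.integral_rexp_neg_mul_sq_norm hb]

section GaussianKernel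

variable {n : ℕ} {ν : ℝ}

lemma continuous_gaussK (x : EuclideanSpace ℝ (Fin n)) : Continuous (gaussK n ν x) := by
  unfold gaussK
  fun_prop

lemma gaussK_eq_mul_exp (x y : EuclideanSpace ℝ (Fin n)) :
    gaussK n ν x y
      = (2 * π * ν ^ 2) ^ (-(n : ℝ) / 2) * rexp (-(2 * ν ^ 2)⁻¹ * ‖x - y‖ ^ 2) := by
  rw [gaussK]
  congr 2
  ring

lemma integral_gaussK (hν : ν ≠ 0) (x : EuclideanSpace ℝ (Fin n)) :
    ∫ y, gaussK n ν x y = 1 := by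
  simp_rw [gaussK_eq_mul_exp, integral_const_mul]
  rw [integral_exp_neg_mul_norm_sub_sq (by positivity), finrank_euclideanSpace_fin, div_inv_eq_mul,
    neg_div, rpow_neg (by positivity), show π * (2 * ν ^ 2) = 2 * π * ν ^ 2 by ring]
  exact inv_mul_cancel₀ (by positivity)

lemma integrable_gaussK (hν : ν ≠ 0) (x : EuclideanSpace ℝ (Fin n)) :
    Integrable (gaussK n ν x) :=
  Integrable.of_integral_ne_zero (by rw [integral_gaussK hν]; exact one_ne_zero)

lemma gaussK_sq (x y : EuclideanSpace ℝ (Fin n)) :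
    gaussK n ν x y ^ 2 = (2 * π * ν ^ 2) ^ (-(n : ℝ)) * rexp (-(ν ^ 2)⁻¹ * ‖x - y‖ ^ 2) := by
  rw [gaussK, mul_pow, ← rpow_mul_natCast (by positivity), ← exp_nat_mul]
  congr 2 <;> push_cast <;> ring

lemma integral_gaussK_sq (hν : 0 < ν) (x : EuclideanSpace ℝ (Fin n)) :
    ∫ y, gaussK n ν x y ^ 2 = ((2 * ν * √π) ^ n)⁻¹ := by
  simp_rw [gaussK_sq, integral_const_mul]
  rw [integral_exp_neg_mul_norm_sub_sq (by positivity), finrank_euclideanSpace_fin]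
  have hsq : π / (ν ^ 2)⁻¹ = (√π * ν) ^ 2 := by
    rw [div_inv_eq_mul, mul_pow, sq_sqrt pi_pos.le]
  have hfac : 2 * π * ν ^ 2 = 2 * ν * √π * (√π * ν) := by
    linear_combination (2 * ν ^ 2) * (sq_sqrt pi_pos.le).symm
  rw [hsq, ← rpow_natCast (√π * ν) 2, ← rpow_mul (by positivity), hfac, rpow_neg (by positivity),
    Nat.cast_ofNat, mul_div_cancel₀ _ two_ne_zero, rpow_natCast, rpow_natCast, mul_pow, mul_inv]
  field_simp

lemma memLp_gaussK (hν : 0 < ν) (x : EuclideanSpace ℝ (Fin n)) :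
    MemLp (gaussK n ν x) 2 volume :=
  (memLp_two_iff_integrable_sq (continuous_gaussK x).aestronglyMeasurable).2 <|
    Integrable.of_integral_ne_zero (by rw [integral_gaussK_sq hν]; positivity)

lemma eLpNorm_gaussK (hν : 0 < ν) (x : EuclideanSpace ℝ (Fin n)) :
    eLpNorm (gaussK n ν x) 2 volume = ENNReal.ofReal √((2 * ν * √π) ^ n)⁻¹ := by
  rw [(memLp_gaussK hν x).eLpNorm_eq_integral_rpow_norm two_ne_zero ENNReal.ofNat_ne_top]
  simp only [ENNReal.toReal_ofNat, norm_eq_abs, rpow_two, sq_abs, integral_gaussK_sq hν x,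
    sqrt_eq_rpow, one_div]

end GaussianKernel

theorem smoothed_nominal_lipschitz_general (n : ℕ) (ν : ℝ) (hν : 0 < ν)
    (φ : ℝ → ℝ) (Lφ : ℝ)
    (hφ : ∀ x y, |φ x - φ y| ≤ Lφ * |x - y|)
    (A₀ : EuclideanSpace ℝ (Fin n) → ℝ)
    (hA : MemLp A₀ 2 (volume : Measure (EuclideanSpace ℝ (Fin n))))
    (v₁ v₂ : EuclideanSpace ℝ (Fin n) → ℝ)
    (hv₁ : MemLp v₁ 2) (hv₂ : MemLp v₂ 2) :
    eLpNorm (fun x => A₀ x *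
        ((∫ y, φ (v₁ y) * gaussK n ν x y) - ∫ y, φ (v₂ y) * gaussK n ν x y)) 2 volume
      ≤ ENNReal.ofReal Lφ * eLpNorm (fun x => v₁ x - v₂ x) 2 volume *
          eLpNorm A₀ 2 volume *
          ENNReal.ofReal (Real.sqrt (((2 * ν * Real.sqrt π) ^ n)⁻¹)) := by
  have hlip : LipschitzWith Lφ.toNNReal φ := .of_dist_le_mul fun a b => by
    simpa only [dist_eq] using
      (hφ a b).trans (mul_le_mul_of_nonneg_right (le_coe_toNNReal Lφ) (abs_nonneg _))
  have hsmooth : ∀ x, ‖(∫ y, φ (v₁ y) * gaussK n ν x y) - ∫ y, φ (v₂ y) * gaussK n ν x y‖ₑ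
      ≤ ENNReal.ofReal Lφ * eLpNorm (fun x => v₁ x - v₂ x) 2 volume *
          ENNReal.ofReal √((2 * ν * √π) ^ n)⁻¹ := fun x => by
    rw [← eLpNorm_gaussK hν x]
    exact enorm_integral_comp_mul_sub_le hlip (integrable_gaussK hν.ne' x) (memLp_gaussK hν x)
      hv₁ hv₂
  calc _ ≤ ENNReal.ofReal Lφ * eLpNorm (fun x => v₁ x - v₂ x) 2 volume *
          ENNReal.ofReal √((2 * ν * √π) ^ n)⁻¹ * eLpNorm A₀ 2 volume :=
        eLpNorm_le_mul_eLpNorm_of_ae_le_mul'' 2 hA.1 <| ae_of_all _ fun x => by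
          rw [enorm_mul, mul_comm]
          exact mul_le_mul_left (hsmooth x) _
    _ = _ := mul_right_comm _ _ _

/-- Lipschitz estimate for the kernel-smoothed nominal function:
`‖A₀·(Φ_ν(v₁) − Φ_ν(v₂))‖_{L²} ≤ L_φ ‖v₁ − v₂‖_{L²} ‖A₀‖_{L²} (2ν√π)^{-n/2}`. -/
theorem smoothed_nominal_lipschitz (n : ℕ) (hn : 0 < n) (ν : ℝ) (hν : 0 < ν)
    (φ : ℝ → ℝ) (Lφ : ℝ) (hLφ : 0 ≤ Lφ)
    (hφ : ∀ x y, |φ x - φ y| ≤ Lφ * |x - y|)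
    (A₀ : EuclideanSpace ℝ (Fin n) → ℝ)
    (hA : MemLp A₀ 2 (volume : Measure (EuclideanSpace ℝ (Fin n))))
    (v₁ v₂ : EuclideanSpace ℝ (Fin n) → ℝ)
    (hv₁ : MemLp v₁ 2) (hv₂ : MemLp v₂ 2) :
    eLpNorm (fun x => A₀ x *
        ((∫ y, φ (v₁ y) * gaussK n ν x y) - ∫ y, φ (v₂ y) * gaussK n ν x y)) 2 volume
      ≤ ENNReal.ofReal Lφ * eLpNorm (fun x => v₁ x - v₂ x) 2 volume *
          eLpNorm A₀ 2 volume *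
          ENNReal.ofReal (Real.sqrt (((2 * ν * Real.sqrt π) ^ n)⁻¹)) :=
  smoothed_nominal_lipschitz_general n ν hν φ Lφ hφ A₀ hA v₁ v₂ hv₁ hv₂
end
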